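/- Let U be unitary on H_s⊗H_e (n = n_s n_e), V_s unitary on H_s, Γ = Tr_s[U(V_s†⊗1_e)], Δ = √(1 − (1/n)‖Γ‖_Tr), and F = (1/(n_s n))‖Γ‖²_HS. Then (1 − Δ)² ≤ F ≤ 1 − Δ², i.e., the maximally-mixed-environment channel fidelity is bounded below by (1−Δ̃_HS)² and above by 1−Δ̃²_HS. -/

import Mathlib

open Matrix Kronecker
open scoped ComplexOrder

/-- Hilbert–Schmidt (Frobenius) norm of a complex square matrix. -/
noncomputable def hsNorm {k : Type*} [Fintype k] (M : Matrix k k ℂ) : ℝ :=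
  Real.sqrt (Matrix.trace (Mᴴ * M)).re

/-- The positive semidefinite square root of a positive semidefinite matrix
(the definition of `Matrix.PosSemidef.sqrt` in the older Mathlib, since removed). -/
noncomputable def Matrix.PosSemidef.sqrt {n : Type*} [Fintype n] [DecidableEq n]
    {A : Matrix n n ℂ} (hA : A.PosSemidef) : Matrix n n ℂ :=
  hA.1.eigenvectorUnitary.1 * diagonal ((↑) ∘ (√·) ∘ hA.1.eigenvalues) *
  (star hA.1.eigenvectorUnitary : Matrix n n ℂ)

/-- Trace norm: trace of the positive-semidefinite square root of `Mᴴ * M`. -/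
noncomputable def traceNorm {k : Type*} [Fintype k] [DecidableEq k] (M : Matrix k k ℂ) : ℝ :=
  (Matrix.trace (Matrix.PosSemidef.sqrt (Matrix.posSemidef_conjTranspose_mul_self M))).re

/-- Induced two-norm: the largest singular value of `M`. -/
noncomputable def twoNorm {k : Type*} [Fintype k] [DecidableEq k] (M : Matrix k k ℂ) : ℝ :=
  ⨆ i, Real.sqrt
    ((Matrix.PosSemidef.isHermitian
      (Matrix.posSemidef_conjTranspose_mul_self M)).eigenvalues i)

/-- Partial trace over the environment factor `e`. -/
noncomputable def ptraceE {s e : Type*} [Fintype s] [Fintype e]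
    (M : Matrix (s × e) (s × e) ℂ) : Matrix s s ℂ :=
  Matrix.of fun i j => ∑ ν : e, M (i, ν) (j, ν)

/-- Partial trace over the system factor `s`. -/
noncomputable def ptraceS {s e : Type*} [Fintype s] [Fintype e]
    (M : Matrix (s × e) (s × e) ℂ) : Matrix e e ℂ :=
  Matrix.of fun μ ν => ∑ i : s, M (i, μ) (i, ν)

/-- A density matrix: positive semidefinite with unit trace. -/
def IsDensity {k : Type*} [Fintype k] (ρ : Matrix k k ℂ) : Prop :=
  ρ.PosSemidef ∧ Matrix.trace ρ = 1

/-!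
Let `W = U (V_s† ⊗ 1_e)` and let `σᵢ` be the singular values of `Γ = Tr_s W`, so that
`‖Γ‖_Tr = ∑ σᵢ` and `‖Γ‖²_HS = ∑ σᵢ²`. Since `Γ v = ∑ⱼ (W (|j⟩ ⊗ v))ⱼ` is a sum of `n_s`
contractions of `v`, every `σᵢ ≤ n_s`. With `x = ‖Γ‖_Tr / n` this gives `F ≤ x ≤ 1` (from
`∑ σᵢ² ≤ n_s ∑ σᵢ`) and `x² ≤ F` (Cauchy–Schwarz, `(∑ σᵢ)² ≤ n_e ∑ σᵢ²`). As `Δ² = 1 - x`, the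
upper bound is `F ≤ x`, and the lower bound is `(1 - Δ)² ≤ (1 - Δ²)² = x² ≤ F`.
-/

open WithLp

section EuclideanNorm

variable {k : Type*} [Fintype k]

lemma re_star_dotProduct_self (x : k → ℂ) : (star x ⬝ᵥ x).re = ‖toLp 2 x‖ ^ 2 := by
  rw [dotProduct_comm, ← EuclideanSpace.inner_toLp_toLp, norm_sq_eq_re_inner (𝕜 := ℂ)]
  rfl

lemma norm_toLp_unitary_mulVec [DecidableEq k] {W : Matrix k k ℂ}
    (hW : W ∈ unitaryGroup k ℂ) (x : k → ℂ) : ‖toLp 2 (W *ᵥ x)‖ = ‖toLp 2 x‖ := by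
  have h : star (W *ᵥ x) ⬝ᵥ (W *ᵥ x) = star x ⬝ᵥ x := by
    rw [star_mulVec, dotProduct_mulVec, vecMul_vecMul, ← star_eq_conjTranspose,
      mem_unitaryGroup_iff'.mp hW, vecMul_one]
  rw [← sq_eq_sq₀ (norm_nonneg _) (norm_nonneg _), ← re_star_dotProduct_self,
    ← re_star_dotProduct_self, h]

end EuclideanNorm

section ProductVectors

variable {s e : Type*} [Fintype s] [Fintype e]

lemma norm_toLp_curry_le (x : s × e → ℂ) (j : s) :
    ‖toLp 2 (Function.curry x j)‖ ≤ ‖toLp 2 x‖ := by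
  simp only [EuclideanSpace.norm_eq]
  gcongr
  rw [Fintype.sum_prod_type]
  exact Finset.single_le_sum (f := fun i => ∑ μ, ‖x (i, μ)‖ ^ 2)
    (fun _ _ => by positivity) (Finset.mem_univ j)

lemma norm_toLp_uncurry_single [DecidableEq s] (j : s) (v : e → ℂ) :
    ‖toLp 2 (Function.uncurry (Pi.single j v))‖ = ‖toLp 2 v‖ := by
  simp only [EuclideanSpace.norm_eq, Fintype.sum_prod_type, Function.uncurry_apply_pair]
  rw [Finset.sum_eq_single j] <;> simp +contextual

end ProductVectors

section PartialTrace

variable {s e : Type*} [Fintype s] [Fintype e] [DecidableEq s]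

lemma ptraceS_mulVec (W : Matrix (s × e) (s × e) ℂ) (v : e → ℂ) :
    ptraceS W *ᵥ v = ∑ j, Function.curry (W *ᵥ Function.uncurry (Pi.single j v)) j := by
  funext μ
  simp only [Finset.sum_apply, Function.curry_apply, mulVec, dotProduct, ptraceS, of_apply,
    Fintype.sum_prod_type, Function.uncurry_apply_pair, Finset.sum_mul]
  rw [Finset.sum_comm]
  refine Finset.sum_congr rfl fun j _ => ?_
  rw [Finset.sum_eq_single j] <;> simp +contextual

lemma norm_toLp_ptraceS_mulVec_le [DecidableEq e] {W : Matrix (s × e) (s × e) ℂ}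
    (hW : W ∈ unitaryGroup (s × e) ℂ) (v : e → ℂ) :
    ‖toLp 2 (ptraceS W *ᵥ v)‖ ≤ Fintype.card s * ‖toLp 2 v‖ := by
  rw [ptraceS_mulVec, toLp_sum]
  calc ‖∑ j, toLp 2 (Function.curry (W *ᵥ Function.uncurry (Pi.single j v)) j)‖
      ≤ ∑ j, ‖toLp 2 (Function.curry (W *ᵥ Function.uncurry (Pi.single j v)) j)‖ :=
        norm_sum_le _ _
    _ ≤ ∑ _j : s, ‖toLp 2 v‖ := by
        gcongr with j
        calc _ ≤ ‖toLp 2 (W *ᵥ Function.uncurry (Pi.single j v))‖ := norm_toLp_curry_le _ j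
          _ = ‖toLp 2 v‖ := by rw [norm_toLp_unitary_mulVec hW, norm_toLp_uncurry_single]
    _ = Fintype.card s * ‖toLp 2 v‖ := by simp

end PartialTrace

section SingularValues

variable {k : Type*} [Fintype k] [DecidableEq k]

noncomputable def singularValues (A : Matrix k k ℂ) (i : k) : ℝ :=
  √((posSemidef_conjTranspose_mul_self A).1.eigenvalues i)

lemma singularValues_nonneg (A : Matrix k k ℂ) (i : k) : 0 ≤ singularValues A i :=
  Real.sqrt_nonneg _

lemma Matrix.PosSemidef.trace_sqrt {A : Matrix k k ℂ} (hA : A.PosSemidef) :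
    hA.sqrt.trace = ∑ i, ((√(hA.1.eigenvalues i) : ℝ) : ℂ) := by
  rw [PosSemidef.sqrt, trace_mul_cycle, mem_unitaryGroup_iff'.mp hA.1.eigenvectorUnitary.2,
    one_mul, trace_diagonal]
  rfl

lemma traceNorm_eq_sum_singularValues (A : Matrix k k ℂ) :
    traceNorm A = ∑ i, singularValues A i := by
  rw [traceNorm, PosSemidef.trace_sqrt, ← Complex.ofReal_sum, Complex.ofReal_re]
  rfl

lemma hsNorm_sq_eq_sum_sq_singularValues (A : Matrix k k ℂ) :
    hsNorm A ^ 2 = ∑ i, singularValues A i ^ 2 := by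
  have hA := posSemidef_conjTranspose_mul_self A
  have htrace : (trace (Aᴴ * A)).re = ∑ i, singularValues A i ^ 2 := by
    simp [hA.1.trace_eq_sum_eigenvalues, singularValues, Real.sq_sqrt (hA.eigenvalues_nonneg _)]
  rw [hsNorm, htrace, Real.sq_sqrt (by positivity)]

lemma singularValues_eq_norm (A : Matrix k k ℂ) (i : k) :
    singularValues A i = ‖toLp 2 (A *ᵥ
      (posSemidef_conjTranspose_mul_self A).1.eigenvectorBasis i)‖ := by
  rw [singularValues, IsHermitian.eigenvalues_eq, ← mulVec_mulVec, dotProduct_mulVec,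
    ← star_mulVec]
  exact (congrArg Real.sqrt (re_star_dotProduct_self _)).trans (Real.sqrt_sq (norm_nonneg _))

lemma singularValues_le_of_norm_toLp_mulVec_le {A : Matrix k k ℂ} {c : ℝ}
    (hc : ∀ v, ‖toLp 2 (A *ᵥ v)‖ ≤ c * ‖toLp 2 v‖) (i : k) : singularValues A i ≤ c := by
  have hA := (posSemidef_conjTranspose_mul_self A).1
  simpa [singularValues_eq_norm, hA.eigenvectorBasis.orthonormal.1 i] using
    hc (hA.eigenvectorBasis i)

lemma traceNorm_nonneg (A : Matrix k k ℂ) : 0 ≤ traceNorm A := by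
  rw [traceNorm_eq_sum_singularValues]
  exact Finset.sum_nonneg fun i _ => singularValues_nonneg A i

lemma traceNorm_sq_le_card_mul_hsNorm_sq (A : Matrix k k ℂ) :
    traceNorm A ^ 2 ≤ Fintype.card k * hsNorm A ^ 2 := by
  rw [traceNorm_eq_sum_singularValues, hsNorm_sq_eq_sum_sq_singularValues]
  exact sq_sum_le_card_mul_sum_sq

variable {A : Matrix k k ℂ} {c : ℝ}

lemma traceNorm_le_mul_card (h : ∀ i, singularValues A i ≤ c) :
    traceNorm A ≤ c * Fintype.card k := by
  rw [traceNorm_eq_sum_singularValues]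
  simpa [mul_comm] using Finset.sum_le_sum fun i (_ : i ∈ Finset.univ) => h i

lemma hsNorm_sq_le_mul_traceNorm (h : ∀ i, singularValues A i ≤ c) :
    hsNorm A ^ 2 ≤ c * traceNorm A := by
  rw [hsNorm_sq_eq_sum_sq_singularValues, traceNorm_eq_sum_singularValues, Finset.mul_sum]
  gcongr with i
  rw [sq]
  exact mul_le_mul_of_nonneg_right (h i) (singularValues_nonneg A i)

end SingularValues

lemma singularValues_ptraceS_le {s e : Type*} [Fintype s] [Fintype e] [DecidableEq s]
    [DecidableEq e] {W : Matrix (s × e) (s × e) ℂ} (hW : W ∈ unitaryGroup (s × e) ℂ) (i : e) :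
    singularValues (ptraceS W) i ≤ Fintype.card s :=
  singularValues_le_of_norm_toLp_mulVec_le (norm_toLp_ptraceS_mulVec_le hW) i

lemma sq_one_sub_sqrt_one_sub_le_sq {x : ℝ} (h0 : 0 ≤ x) (h1 : x ≤ 1) :
    (1 - √(1 - x)) ^ 2 ≤ x ^ 2 := by
  obtain ⟨t, ht0, ht1, rfl⟩ : ∃ t, 0 ≤ t ∧ t ≤ 1 ∧ x = 1 - t ^ 2 :=
    ⟨√(1 - x), Real.sqrt_nonneg _, Real.sqrt_le_one.mpr (by linarith),
      by rw [Real.sq_sqrt (by linarith)]; ring⟩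
  rw [sub_sub_cancel, Real.sqrt_sq ht0]
  nlinarith [mul_nonneg (sq_nonneg (1 - t)) (mul_nonneg ht0 (by linarith : 0 ≤ 2 + t))]

lemma fidelity_bounds_of_norm_inequalities {T H a b : ℝ} (ha : 0 ≤ a) (hb : 0 ≤ b)
    (hT0 : 0 ≤ T) (hT : T ≤ a * b) (hH : H ≤ a * T) (hCS : T ^ 2 ≤ b * H) :
    (1 - √(1 - T / (a * b))) ^ 2 ≤ H / (a * (a * b)) ∧
      H / (a * (a * b)) ≤ 1 - √(1 - T / (a * b)) ^ 2 := by
  rcases (mul_nonneg ha hb).eq_or_lt with hab | hab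
  · simp [← hab]
  have ha' : 0 < a := ha.lt_of_ne (by rintro rfl; simp at hab)
  have hx0 : 0 ≤ T / (a * b) := by positivity
  have hx1 : T / (a * b) ≤ 1 := div_le_one_of_le₀ hT hab.le
  have hyx : H / (a * (a * b)) ≤ T / (a * b) := by
    rw [div_le_div_iff₀ (by positivity) hab]
    nlinarith
  have hxy : (T / (a * b)) ^ 2 ≤ H / (a * (a * b)) := by
    rw [div_pow, div_le_div_iff₀ (by positivity) (by positivity)]
    nlinarith [mul_le_mul_of_nonneg_left hCS (by positivity : 0 ≤ a ^ 2 * b)]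
  refine ⟨(sq_one_sub_sqrt_one_sub_le_sq hx0 hx1).trans hxy, ?_⟩
  rw [Real.sq_sqrt (by linarith)]
  linarith

theorem stmt18_general {s e : Type*} [Fintype s] [Fintype e] [DecidableEq s] [DecidableEq e]
    (U : Matrix (s × e) (s × e) ℂ) (hU : U ∈ Matrix.unitaryGroup (s × e) ℂ)
    (Vs : Matrix s s ℂ) (hVs : Vs ∈ Matrix.unitaryGroup s ℂ) :
    (1 - Real.sqrt (1 - traceNorm (ptraceS (U * (Vsᴴ ⊗ₖ (1 : Matrix e e ℂ)))) /
        (Fintype.card (s × e)))) ^ 2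
      ≤ hsNorm (ptraceS (U * (Vsᴴ ⊗ₖ (1 : Matrix e e ℂ)))) ^ 2 /
        ((Fintype.card s) * (Fintype.card (s × e))) ∧
    hsNorm (ptraceS (U * (Vsᴴ ⊗ₖ (1 : Matrix e e ℂ)))) ^ 2 /
        ((Fintype.card s) * (Fintype.card (s × e)))
      ≤ 1 - Real.sqrt (1 - traceNorm (ptraceS (U * (Vsᴴ ⊗ₖ (1 : Matrix e e ℂ)))) /
          (Fintype.card (s × e))) ^ 2 := by
  have hW := mul_mem hU
    (kronecker_mem_unitary (Unitary.star_mem hVs) (one_mem (unitaryGroup e ℂ)))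
  have hσ := singularValues_ptraceS_le hW
  rw [Fintype.card_prod, Nat.cast_mul]
  exact fidelity_bounds_of_norm_inequalities (Nat.cast_nonneg _) (Nat.cast_nonneg _)
    (traceNorm_nonneg _) (traceNorm_le_mul_card hσ) (hsNorm_sq_le_mul_traceNorm hσ)
    (traceNorm_sq_le_card_mul_hsNorm_sq _)

/-- with `Γ = Tr_s[U(V_s† ⊗ 1_e)]`, `Δ = √(1 − ‖Γ‖_Tr/n)` and
`F = ‖Γ‖²_HS/(n_s n)`, one has `(1 − Δ)² ≤ F ≤ 1 − Δ²`. -/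
theorem stmt18 {s e : Type*} [Fintype s] [Fintype e] [DecidableEq s] [DecidableEq e]
    [Nonempty s] [Nonempty e]
    (U : Matrix (s × e) (s × e) ℂ) (hU : U ∈ Matrix.unitaryGroup (s × e) ℂ)
    (Vs : Matrix s s ℂ) (hVs : Vs ∈ Matrix.unitaryGroup s ℂ) :
    (1 - Real.sqrt (1 - traceNorm (ptraceS (U * (Vsᴴ ⊗ₖ (1 : Matrix e e ℂ)))) /
        (Fintype.card (s × e)))) ^ 2
      ≤ hsNorm (ptraceS (U * (Vsᴴ ⊗ₖ (1 : Matrix e e ℂ)))) ^ 2 /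
        ((Fintype.card s) * (Fintype.card (s × e))) ∧
    hsNorm (ptraceS (U * (Vsᴴ ⊗ₖ (1 : Matrix e e ℂ)))) ^ 2 /
        ((Fintype.card s) * (Fintype.card (s × e)))
      ≤ 1 - Real.sqrt (1 - traceNorm (ptraceS (U * (Vsᴴ ⊗ₖ (1 : Matrix e e ℂ)))) /
          (Fintype.card (s × e))) ^ 2 :=
  stmt18_general U hU Vs hVs
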